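/- Let σ : ℝ → ℝ be smooth with σ(t) ≠ 0 for all t, let g : ℝ → ℝ be smooth, let λ ∈ ℝ, and define C(t) := g'(t)/(2σ(t)). If u : ℝ³ → ℝ is smooth and satisfies ∂x(∂t u + u ∂x u − ∂x² u) + σ(t) ∂y² u = 0 for all (x,y,t), then the function v(x,y,t) := u(x + C(t)(λ y − λ² g(t)/2), y − λ g(t), t) − C'(t)(λ y − λ² g(t)/2) also satisfies this equation for all (x,y,t). (This is the finite form of the symmetry generated by Y(g) = g(t)∂y − (g'(t)/(2σ(t))) y ∂x − (d/dt)(g'(t)/(2σ(t))) y ∂u.) -/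

import Mathlib

/-- Partial derivative in the first (`x`) variable. -/
noncomputable def pdx (u : ℝ → ℝ → ℝ → ℝ) : ℝ → ℝ → ℝ → ℝ :=
  fun x y t => deriv (fun s => u s y t) x

/-- Partial derivative in the second (`y`) variable. -/
noncomputable def pdy (u : ℝ → ℝ → ℝ → ℝ) : ℝ → ℝ → ℝ → ℝ :=
  fun x y t => deriv (fun s => u x s t) y

/-- Partial derivative in the third (`t`) variable. -/
noncomputable def pdt (u : ℝ → ℝ → ℝ → ℝ) : ℝ → ℝ → ℝ → ℝ :=
  fun x y t => deriv (fun s => u x y s) t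

/-- The two-dimensional generalized Burgers equation
`∂x(∂t u + u ∂x u − ∂x² u) + σ(t) ∂y² u = 0`. -/
def IsGB2 (σ : ℝ → ℝ) (u : ℝ → ℝ → ℝ → ℝ) : Prop :=
  ∀ x y t : ℝ,
    pdx (fun x y t => pdt u x y t + u x y t * pdx u x y t - pdx (pdx u) x y t) x y t
      + σ t * pdy (pdy u) x y t = 0

/-- The coefficient `C(t) = g'(t)/(2σ(t))`. -/
noncomputable def Ccoef (σ g : ℝ → ℝ) : ℝ → ℝ :=
  fun t => deriv g t / (2 * σ t)

/-! The transformation belongs to the family of shears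
`u ↦ u(x + a y + b, y + c, t) − a' y − e` with `a, b, c, e` functions of `t`. By the chain rule
such a shear changes the Burgers operator only by `(b' − e + σ a²) u_xx + (c' + 2σa) u_xy`,
evaluated at the sheared point, so it is a symmetry as soon as `c' = −2σa` and `e = b' + σa²`.
For `a = λC`, `b = −λ²Cg/2`, `c = −λg`, `e = −λ²C'g/2` both conditions reduce to `σC = g'/2`. -/

open Function
open scoped ContDiff

section DirDeriv

variable {E : Type*} [NormedAddCommGroup E] [NormedSpace ℝ E]

noncomputable def dirDeriv (v : E) (F : E → ℝ) : E → ℝ :=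
  fun p => fderiv ℝ F p v

theorem ContDiff.dirDeriv {n : WithTop ℕ∞} {F : E → ℝ} (hF : ContDiff ℝ (n + 1) F) (v : E) :
    ContDiff ℝ n (dirDeriv v F) :=
  (hF.fderiv_right le_rfl).clm_apply contDiff_const

theorem DifferentiableAt.hasDerivAt_comp {F : E → ℝ} {γ : ℝ → E} {v : E} {s : ℝ}
    (hF : DifferentiableAt ℝ F (γ s)) (hγ : HasDerivAt γ v s) :
    HasDerivAt (fun r => F (γ r)) (dirDeriv v F (γ s)) s :=
  hF.hasFDerivAt.comp_hasDerivAt s hγ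

theorem dirDeriv_comm {F : E → ℝ} (hF : ContDiff ℝ 2 F) (v w p : E) :
    dirDeriv v (dirDeriv w F) p = dirDeriv w (dirDeriv v F) p := by
  have hF' : DifferentiableAt ℝ (fderiv ℝ F) p :=
    ((hF.fderiv_right (m := 1) le_rfl).differentiable one_ne_zero).differentiableAt
  have happly (z z' : E) : dirDeriv z (dirDeriv z' F) p = fderiv ℝ (fderiv ℝ F) p z z' := by
    change fderiv ℝ (fun q => fderiv ℝ F q z') p z = _
    rw [fderiv_clm_apply hF' (differentiableAt_const z')]
    simp
  rw [happly, happly]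
  exact hF.contDiffAt.isSymmSndFDerivAt (by simp) v w

end DirDeriv

local notation "∂₁" => dirDeriv ((1 : ℝ), (0 : ℝ), (0 : ℝ))
local notation "∂₂" => dirDeriv ((0 : ℝ), (1 : ℝ), (0 : ℝ))
local notation "∂₃" => dirDeriv ((0 : ℝ), (0 : ℝ), (1 : ℝ))

theorem dirDeriv_prodMk (F : ℝ × ℝ × ℝ → ℝ) (a b c : ℝ) (p : ℝ × ℝ × ℝ) :
    dirDeriv (a, b, c) F p = a * ∂₁ F p + b * ∂₂ F p + c * ∂₃ F p := by
  have hv : ((a, b, c) : ℝ × ℝ × ℝ) = a • ((1 : ℝ), (0 : ℝ), (0 : ℝ))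
      + b • ((0 : ℝ), (1 : ℝ), (0 : ℝ)) + c • ((0 : ℝ), (0 : ℝ), (1 : ℝ)) := by
    simp
  simp only [dirDeriv, hv, map_add, map_smul, smul_eq_mul]

theorem DifferentiableAt.hasDerivAt_comp_prodMk {F : ℝ × ℝ × ℝ → ℝ} {γ : ℝ → ℝ × ℝ × ℝ}
    {a b c s : ℝ} (hF : DifferentiableAt ℝ F (γ s)) (hγ : HasDerivAt γ (a, b, c) s) :
    HasDerivAt (fun r => F (γ r)) (a * ∂₁ F (γ s) + b * ∂₂ F (γ s) + c * ∂₃ F (γ s)) s :=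
  dirDeriv_prodMk F a b c (γ s) ▸ hF.hasDerivAt_comp hγ

noncomputable def burgersFlux (u : ℝ → ℝ → ℝ → ℝ) (x y t : ℝ) : ℝ :=
  pdt u x y t + u x y t * pdx u x y t - pdx (pdx u) x y t

noncomputable def burgersOp (σ : ℝ → ℝ) (u : ℝ → ℝ → ℝ → ℝ) (x y t : ℝ) : ℝ :=
  pdx (burgersFlux u) x y t + σ t * pdy (pdy u) x y t

theorem isGB2_iff (σ : ℝ → ℝ) (u : ℝ → ℝ → ℝ → ℝ) :
    IsGB2 σ u ↔ ∀ x y t, burgersOp σ u x y t = 0 :=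
  Iff.rfl

noncomputable def burgersOpFDeriv (σ : ℝ → ℝ) (U : ℝ × ℝ × ℝ → ℝ) (p : ℝ × ℝ × ℝ) : ℝ :=
  ∂₁ (∂₃ U) p + ∂₁ U p ^ 2 + U p * ∂₁ (∂₁ U) p - ∂₁ (∂₁ (∂₁ U)) p + σ p.2.2 * ∂₂ (∂₂ U) p

section Shear

variable (a b c e : ℝ → ℝ) (u : ℝ → ℝ → ℝ → ℝ)

def shearPoint (x y t : ℝ) : ℝ × ℝ × ℝ :=
  (x + a t * y + b t, y + c t, t)

noncomputable def shearTransform : ℝ → ℝ → ℝ → ℝ :=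
  fun x y t => ↿u (shearPoint a b c x y t) - deriv a t * y - e t

variable {a b c e u}

theorem hasDerivAt_shearPoint_x (a b c : ℝ → ℝ) (x y t : ℝ) :
    HasDerivAt (fun s => shearPoint a b c s y t) (1, 0, 0) x :=
  (((hasDerivAt_id' x).add_const _).add_const _).prodMk
    ((hasDerivAt_const x _).prodMk (hasDerivAt_const x t))

theorem hasDerivAt_shearPoint_y (a b c : ℝ → ℝ) (x y t : ℝ) :
    HasDerivAt (fun s => shearPoint a b c x s t) (a t, 1, 0) y := by
  have h := (((hasDerivAt_id' y).const_mul (a t)).const_add x).add_const (b t)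
  rw [mul_one] at h
  exact h.prodMk (((hasDerivAt_id' y).add_const _).prodMk (hasDerivAt_const y t))

theorem hasDerivAt_shearPoint_t {x y t : ℝ} (ha : DifferentiableAt ℝ a t)
    (hb : DifferentiableAt ℝ b t) (hc : DifferentiableAt ℝ c t) :
    HasDerivAt (fun s => shearPoint a b c x y s) (deriv a t * y + deriv b t, deriv c t, 1) t :=
  ((ha.hasDerivAt.mul_const y).const_add x |>.add hb.hasDerivAt).prodMk
    ((hc.hasDerivAt.const_add y).prodMk (hasDerivAt_id' t))

theorem hasDerivAt_comp_shearPoint_x {F : ℝ × ℝ × ℝ → ℝ} (hF : Differentiable ℝ F)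
    (x y t : ℝ) :
    HasDerivAt (fun s => F (shearPoint a b c s y t)) (∂₁ F (shearPoint a b c x y t)) x :=
  (hF _).hasDerivAt_comp (hasDerivAt_shearPoint_x a b c x y t)

theorem pdx_comp_shearPoint {F : ℝ × ℝ × ℝ → ℝ} (hF : Differentiable ℝ F) :
    pdx (fun x y t => F (shearPoint a b c x y t)) = fun x y t => ∂₁ F (shearPoint a b c x y t) :=
  funext₃ fun x y t => (hasDerivAt_comp_shearPoint_x hF x y t).deriv

theorem hasDerivAt_shearTransform_x (hu : Differentiable ℝ ↿u) (x y t : ℝ) :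
    HasDerivAt (fun s => shearTransform a b c e u s y t) (∂₁ ↿u (shearPoint a b c x y t)) x :=
  ((hasDerivAt_comp_shearPoint_x hu x y t).sub_const _).sub_const _

theorem pdx_shearTransform (hu : Differentiable ℝ ↿u) :
    pdx (shearTransform a b c e u) = fun x y t => ∂₁ ↿u (shearPoint a b c x y t) :=
  funext₃ fun x y t => (hasDerivAt_shearTransform_x hu x y t).deriv

theorem pdy_shearTransform (hu : Differentiable ℝ ↿u) :
    pdy (shearTransform a b c e u) = fun x y t =>
      a t * ∂₁ ↿u (shearPoint a b c x y t) + ∂₂ ↿u (shearPoint a b c x y t) - deriv a t := by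
  funext x y t
  have h := (((hu _).hasDerivAt_comp_prodMk (hasDerivAt_shearPoint_y a b c x y t)).sub
    ((hasDerivAt_id' y).const_mul (deriv a t))).sub_const (e t)
  exact h.deriv.trans (by ring)

theorem pdt_shearTransform (hu : Differentiable ℝ ↿u) (ha : Differentiable ℝ a)
    (ha' : Differentiable ℝ (deriv a)) (hb : Differentiable ℝ b) (hc : Differentiable ℝ c)
    (he : Differentiable ℝ e) :
    pdt (shearTransform a b c e u) = fun x y t =>
      (deriv a t * y + deriv b t) * ∂₁ ↿u (shearPoint a b c x y t)
        + deriv c t * ∂₂ ↿u (shearPoint a b c x y t) + ∂₃ ↿u (shearPoint a b c x y t)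
        - deriv (deriv a) t * y - deriv e t := by
  funext x y t
  have h := (((hu _).hasDerivAt_comp_prodMk
    (hasDerivAt_shearPoint_t (x := x) (y := y) (ha t) (hb t) (hc t))).sub
    ((ha' t).hasDerivAt.mul_const y)).sub (he t).hasDerivAt
  exact h.deriv.trans (by ring)

theorem pdy_pdy_shearTransform (hu : ContDiff ℝ 2 ↿u) (x y t : ℝ) :
    pdy (pdy (shearTransform a b c e u)) x y t =
      a t * (a t * ∂₁ (∂₁ ↿u) (shearPoint a b c x y t) + ∂₂ (∂₁ ↿u) (shearPoint a b c x y t))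
        + (a t * ∂₁ (∂₂ ↿u) (shearPoint a b c x y t) + ∂₂ (∂₂ ↿u) (shearPoint a b c x y t)) := by
  have hU₁ : Differentiable ℝ (∂₁ ↿u) := (hu.dirDeriv (n := 1) _).differentiable one_ne_zero
  have hU₂ : Differentiable ℝ (∂₂ ↿u) := (hu.dirDeriv (n := 1) _).differentiable one_ne_zero
  rw [pdy_shearTransform (hu.differentiable two_ne_zero)]
  have h := ((((hU₁ _).hasDerivAt_comp_prodMk (hasDerivAt_shearPoint_y a b c x y t)).const_mul
    (a t)).add ((hU₂ _).hasDerivAt_comp_prodMk (hasDerivAt_shearPoint_y a b c x y t))).sub_const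
    (deriv a t)
  exact h.deriv.trans (by ring)

theorem pdx_burgersFlux_shearTransform (hu : ContDiff ℝ 3 ↿u) (ha : ContDiff ℝ 2 a)
    (hb : Differentiable ℝ b) (hc : Differentiable ℝ c) (he : Differentiable ℝ e) (x y t : ℝ) :
    pdx (burgersFlux (shearTransform a b c e u)) x y t =
      (deriv a t * y + deriv b t) * ∂₁ (∂₁ ↿u) (shearPoint a b c x y t)
        + deriv c t * ∂₁ (∂₂ ↿u) (shearPoint a b c x y t) + ∂₁ (∂₃ ↿u) (shearPoint a b c x y t)
        + (∂₁ ↿u (shearPoint a b c x y t) * ∂₁ ↿u (shearPoint a b c x y t)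
          + shearTransform a b c e u x y t * ∂₁ (∂₁ ↿u) (shearPoint a b c x y t))
        - ∂₁ (∂₁ (∂₁ ↿u)) (shearPoint a b c x y t) := by
  have hU : Differentiable ℝ ↿u := hu.differentiable three_ne_zero
  have hU₁ : Differentiable ℝ (∂₁ ↿u) := (hu.dirDeriv (n := 2) _).differentiable two_ne_zero
  have hU₂ : Differentiable ℝ (∂₂ ↿u) := (hu.dirDeriv (n := 2) _).differentiable two_ne_zero
  have hU₃ : Differentiable ℝ (∂₃ ↿u) := (hu.dirDeriv (n := 2) _).differentiable two_ne_zero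
  have hU₁₁ : Differentiable ℝ (∂₁ (∂₁ ↿u)) :=
    ((hu.dirDeriv (n := 2) _).dirDeriv (n := 1) _).differentiable one_ne_zero
  unfold burgersFlux
  rw [pdt_shearTransform hU (ha.differentiable two_ne_zero) ha.differentiable_deriv_two
    hb hc he, pdx_shearTransform hU, pdx_comp_shearPoint hU₁]
  have hfst {F : ℝ × ℝ × ℝ → ℝ} (hF : Differentiable ℝ F) :=
    hasDerivAt_comp_shearPoint_x (a := a) (b := b) (c := c) hF x y t
  have htime := ((((hfst hU₁).const_mul (deriv a t * y + deriv b t)).add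
    ((hfst hU₂).const_mul (deriv c t))).add (hfst hU₃)).sub_const (deriv (deriv a) t * y)
    |>.sub_const (deriv e t)
  have hconv :=
    (hasDerivAt_shearTransform_x (a := a) (b := b) (c := c) (e := e) hU x y t).mul (hfst hU₁)
  exact ((htime.add hconv).sub (hfst hU₁₁)).deriv

theorem burgersOp_shearTransform (σ : ℝ → ℝ) (hu : ContDiff ℝ 3 ↿u) (ha : ContDiff ℝ 2 a)
    (hb : Differentiable ℝ b) (hc : Differentiable ℝ c) (he : Differentiable ℝ e) (x y t : ℝ) :
    burgersOp σ (shearTransform a b c e u) x y t =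
      burgersOpFDeriv σ ↿u (shearPoint a b c x y t)
        + (deriv b t - e t + σ t * a t ^ 2) * ∂₁ (∂₁ ↿u) (shearPoint a b c x y t)
        + (deriv c t + 2 * σ t * a t) * ∂₁ (∂₂ ↿u) (shearPoint a b c x y t) := by
  have hu₂ : ContDiff ℝ 2 ↿u := hu.of_le (by norm_num)
  rw [burgersOp, pdx_burgersFlux_shearTransform hu ha hb hc he, pdy_pdy_shearTransform hu₂,
    dirDeriv_comm hu₂ (0, 1, 0) (1, 0, 0)]
  simp only [burgersOpFDeriv, shearTransform, shearPoint]
  ring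

theorem burgersOp_eq_burgersOpFDeriv (σ : ℝ → ℝ) (hu : ContDiff ℝ 3 ↿u) (x y t : ℝ) :
    burgersOp σ u x y t = burgersOpFDeriv σ ↿u (x, y, t) := by
  have h := burgersOp_shearTransform (a := 0) (b := 0) (c := 0) (e := 0) σ hu contDiff_zero_fun
    (differentiable_const 0) (differentiable_const 0) (differentiable_const 0) x y t
  have h₀ : shearTransform 0 0 0 0 u = u := by
    funext x y t
    simp only [shearTransform, shearPoint, Pi.zero_apply, zero_mul, add_zero, deriv_zero, sub_zero]
    rfl
  simpa [h₀, shearPoint] using h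

theorem IsGB2.shearTransform {σ : ℝ → ℝ} (hu : ContDiff ℝ 3 ↿u) (heq : IsGB2 σ u)
    (ha : ContDiff ℝ 2 a) (hb : Differentiable ℝ b) (hc : Differentiable ℝ c)
    (he : Differentiable ℝ e) (hca : ∀ t, deriv c t = -2 * σ t * a t)
    (heb : ∀ t, e t = deriv b t + σ t * a t ^ 2) :
    IsGB2 σ (shearTransform a b c e u) := by
  rw [isGB2_iff] at heq ⊢
  intro x y t
  rw [burgersOp_shearTransform σ hu ha hb hc he, shearPoint,
    ← burgersOp_eq_burgersOpFDeriv σ hu, hca, heb, heq]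
  ring

end Shear

theorem shearTransform_eq_ySymmetry (C g : ℝ → ℝ) (lam : ℝ) (u : ℝ → ℝ → ℝ → ℝ) :
    shearTransform (fun t => lam * C t) (fun t => -(lam ^ 2 * (C t * g t) / 2))
      (fun t => -(lam * g t)) (fun t => -(lam ^ 2 * (deriv C t * g t) / 2)) u =
    fun x y t => u (x + C t * (lam * y - lam ^ 2 * g t / 2)) (y - lam * g t) t
      - deriv C t * (lam * y - lam ^ 2 * g t / 2) := by
  funext x y t
  simp only [shearTransform, shearPoint, deriv_const_mul_field']
  rw [show x + lam * C t * y + -(lam ^ 2 * (C t * g t) / 2)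
      = x + C t * (lam * y - lam ^ 2 * g t / 2) by ring,
    show y + -(lam * g t) = y - lam * g t by ring]
  change u _ _ _ - _ - _ = _
  ring

theorem IsGB2.ySymmetry {σ C g : ℝ → ℝ} {u : ℝ → ℝ → ℝ → ℝ} (hu : ContDiff ℝ 3 ↿u)
    (heq : IsGB2 σ u) (hC : ContDiff ℝ 2 C) (hg : Differentiable ℝ g)
    (hσC : ∀ t, σ t * C t = deriv g t / 2) (lam : ℝ) :
    IsGB2 σ (fun x y t => u (x + C t * (lam * y - lam ^ 2 * g t / 2)) (y - lam * g t) t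
      - deriv C t * (lam * y - lam ^ 2 * g t / 2)) := by
  have hCd : Differentiable ℝ C := hC.differentiable two_ne_zero
  have hC'd : Differentiable ℝ (deriv C) := hC.differentiable_deriv_two
  rw [← shearTransform_eq_ySymmetry]
  refine heq.shearTransform hu (contDiff_const.mul hC) (by fun_prop) (by fun_prop) (by fun_prop)
    (fun t => ?_) (fun t => ?_)
  · simp only [deriv.fun_neg, deriv_const_mul_field']
    linear_combination 2 * lam * hσC t
  · have hb : HasDerivAt (fun t => -(lam ^ 2 * (C t * g t) / 2))
        (-(lam ^ 2 * (deriv C t * g t + C t * deriv g t) / 2)) t :=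
      (((hCd t).hasDerivAt.mul (hg t).hasDerivAt).const_mul (lam ^ 2)).div_const 2 |>.neg
    rw [hb.deriv]
    linear_combination (-(lam ^ 2 * C t)) * hσC t

theorem stmt14 (σ : ℝ → ℝ) (hσ : ContDiff ℝ (⊤ : ℕ∞) σ) (hσ0 : ∀ t, σ t ≠ 0)
    (g : ℝ → ℝ) (hg : ContDiff ℝ (⊤ : ℕ∞) g) (lam : ℝ)
    (u : ℝ → ℝ → ℝ → ℝ)
    (hu : ContDiff ℝ (⊤ : ℕ∞) (fun p : ℝ × ℝ × ℝ => u p.1 p.2.1 p.2.2))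
    (heq : IsGB2 σ u) :
    IsGB2 σ (fun x y t =>
      u (x + Ccoef σ g t * (lam * y - lam ^ 2 * g t / 2)) (y - lam * g t) t
        - deriv (Ccoef σ g) t * (lam * y - lam ^ 2 * g t / 2)) := by
  have hC : ContDiff ℝ ∞ (Ccoef σ g) :=
    (hg.iterate_deriv 1).div (contDiff_const.mul hσ) fun t => mul_ne_zero two_ne_zero (hσ0 t)
  refine heq.ySymmetry (contDiff_infty.mp hu 3) (contDiff_infty.mp hC 2)
    (hg.differentiable (by simp)) (fun t => ?_) lam
  simp only [Ccoef]
  field_simp [hσ0 t]
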